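/- arXiv:0909.1270 — 6 statements merged into one kernel-verified Lean document; each statement's English description precedes it below -/
import Mathlib

section
/- Define S(r) = 2·Σ_{n : aₙ rⁿ ≥ 1} log(aₙ rⁿ) for a log-concave positive coefficient sequence (aₙ) with a₀ = 1. Then (N₁(r) - 1)·log μ(r) ≤ S(r) ≤ 2·N₁(r)·log μ(r), where N₁(r) = #{n : aₙ rⁿ ≥ 1} and μ(r) = maxₙ aₙ rⁿ. -/
open Filter Finset

/-!
Put `b n = log (aₙ rⁿ)`: a concave sequence with `b 0 = 0` that is eventually negative, so
`N₁ = {n | 0 ≤ b n}` is an interval `[0, m]` and `log μ = b ν` for some `ν ≤ m`. The upper bound is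
termwise. For the lower bound, concavity gives `b k + b (L - k) ≥ b 0 + b L` on `[0, L]`, hence the
trapezoid inequality `2 ∑_{k ≤ L} b k ≥ (L + 1) (b 0 + b L)`; applied on `[0, ν]` and on `[ν, m]`,
where the endpoint values are nonnegative, it yields `2 ∑_{k ≤ m} b k ≥ m b ν`.
-/

section ConcaveSequence

variable {b : ℕ → ℝ}

theorem chord_le_of_antitone_sub (hb : Antitone fun n => b (n + 1) - b n) {k j : ℕ}
    (hkj : k ≤ j) : ((j : ℝ) - k) * b 0 + k * b j ≤ j * b k := by
  set d : ℕ → ℝ := fun n => b (n + 1) - b n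
  have hleft : (k : ℝ) * d k ≤ b k - b 0 := by
    rw [← Finset.sum_range_sub b k]
    simpa only [card_range, nsmul_eq_mul] using
      card_nsmul_le_sum (range k) d (d k) fun i hi => hb (mem_range.1 hi).le
  have hright : b j - b k ≤ ((j : ℝ) - k) * d k := by
    rw [← Finset.sum_Ico_sub b hkj]
    simpa only [Nat.card_Ico, nsmul_eq_mul, Nat.cast_sub hkj] using
      sum_le_card_nsmul (Ico k j) d (d k) fun i hi => hb (mem_Ico.1 hi).1
  have hjk : (0 : ℝ) ≤ j - k := sub_nonneg.2 (by exact_mod_cast hkj)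
  nlinarith [mul_le_mul_of_nonneg_left hleft hjk, mul_le_mul_of_nonneg_left hright k.cast_nonneg]

theorem nonneg_of_le_of_antitone_sub (hb : Antitone fun n => b (n + 1) - b n) (h0 : 0 ≤ b 0)
    {k j : ℕ} (hj : 0 ≤ b j) (hkj : k ≤ j) : 0 ≤ b k := by
  rcases Nat.eq_zero_or_pos j with rfl | hjpos
  · rwa [Nat.le_zero.1 hkj]
  have hchord := chord_le_of_antitone_sub hb hkj
  have hjk : (0 : ℝ) ≤ j - k := sub_nonneg.2 (by exact_mod_cast hkj)
  refine nonneg_of_mul_nonneg_right ?_ (Nat.cast_pos.2 hjpos)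
  nlinarith [mul_nonneg hjk h0, mul_nonneg k.cast_nonneg hj]

theorem exists_setOf_nonneg_eq_Iic (hb : Antitone fun n => b (n + 1) - b n) (h0 : 0 ≤ b 0)
    (hneg : ∃ n, b n < 0) : ∃ m, {n | 0 ≤ b n} = Set.Iic m := by
  have hfind_pos : 0 < Nat.find hneg :=
    Nat.pos_of_ne_zero fun h => (Nat.find_spec hneg).not_ge (h ▸ h0)
  refine ⟨Nat.find hneg - 1, Set.ext fun n => ⟨fun hn => ?_, fun hn => ?_⟩⟩
  · by_contra hlt
    have hle : Nat.find hneg ≤ n := by simp only [Set.mem_Iic] at hlt; omega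
    exact (Nat.find_spec hneg).not_ge (nonneg_of_le_of_antitone_sub hb h0 hn hle)
  · exact not_lt.1 (Nat.find_min hneg (by simp only [Set.mem_Iic] at hn; omega))

theorem mul_add_le_two_mul_sum_range (hb : Antitone fun n => b (n + 1) - b n) (L : ℕ) :
    ((L : ℝ) + 1) * (b 0 + b L) ≤ 2 * ∑ k ∈ range (L + 1), b k := by
  have hpair : ∀ k ∈ range (L + 1), b 0 + b L ≤ b k + b (L - k) := by
    intro k hk
    have hkL : k ≤ L := Nat.lt_succ_iff.1 (mem_range.1 hk)
    rcases Nat.eq_zero_or_pos L with rfl | hLpos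
    · simp [Nat.le_zero.1 hkL]
    have h1 := chord_le_of_antitone_sub hb hkL
    have h2 := chord_le_of_antitone_sub hb (Nat.sub_le L k)
    rw [Nat.cast_sub hkL] at h2
    refine le_of_mul_le_mul_left ?_ (Nat.cast_pos.2 hLpos)
    linarith
  calc ((L : ℝ) + 1) * (b 0 + b L) = ∑ _k ∈ range (L + 1), (b 0 + b L) := by
        rw [sum_const, card_range, nsmul_eq_mul, Nat.cast_succ]
    _ ≤ ∑ k ∈ range (L + 1), (b k + b (L - k)) := sum_le_sum hpair
    _ = 2 * ∑ k ∈ range (L + 1), b k := by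
        rw [sum_add_distrib, two_mul]
        congr 1
        simpa using sum_range_reflect b (L + 1)

theorem mul_le_two_mul_sum_range (hb : Antitone fun n => b (n + 1) - b n) (h0 : 0 ≤ b 0)
    {ν m : ℕ} (hm : 0 ≤ b m) (hνm : ν ≤ m) :
    (m : ℝ) * b ν ≤ 2 * ∑ k ∈ range (m + 1), b k := by
  obtain ⟨L, rfl⟩ := Nat.exists_eq_add_of_le hνm
  have hinit := mul_add_le_two_mul_sum_range hb ν
  have htail := mul_add_le_two_mul_sum_range (b := fun n => b (ν + n))
    (fun x y hxy => hb (Nat.add_le_add_left hxy ν)) L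
  rw [sum_range_succ] at hinit
  rw [add_zero] at htail
  rw [add_assoc, sum_range_add]
  push_cast at htail ⊢
  linarith [mul_nonneg (by positivity : (0 : ℝ) ≤ ν + 1) h0,
    mul_nonneg (by positivity : (0 : ℝ) ≤ L + 1) hm]

end ConcaveSequence

theorem antitone_log_sub_of_log_concave {c : ℕ → ℝ} (hc : ∀ n, 0 < c n)
    (hconc : ∀ n, c n * c (n + 2) ≤ c (n + 1) ^ 2) :
    Antitone fun n => Real.log (c (n + 1)) - Real.log (c n) := by
  refine antitone_nat_of_succ_le fun n => ?_
  have hlog := Real.log_le_log (mul_pos (hc n) (hc (n + 2))) (hconc n)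
  rw [Real.log_mul (hc n).ne' (hc (n + 2)).ne', Real.log_pow] at hlog
  push_cast at hlog
  linarith

theorem eventually_log_mul_pow_neg {a : ℕ → ℝ} (ha : ∀ n, 0 < a n) {r : ℝ} (hr : 0 < r)
    (hdecay : Tendsto (fun n : ℕ => Real.log (a n) / n) atTop atBot) :
    ∀ᶠ n in atTop, Real.log (a n * r ^ n) < 0 := by
  filter_upwards [(tendsto_atBot_add_const_right _ (Real.log r) hdecay).eventually
    (eventually_lt_atBot 0), eventually_ge_atTop 1] with n hneg hn
  have hnpos : (0 : ℝ) < n := by exact_mod_cast hn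
  rw [Real.log_mul (ha n).ne' (pow_pos hr n).ne', Real.log_pow]
  have hmul := mul_neg_of_pos_of_neg hnpos hneg
  rwa [mul_add, mul_div_cancel₀ _ hnpos.ne'] at hmul

theorem mul_pow_log_concave {a : ℕ → ℝ} (hconc : ∀ n, a n * a (n + 2) ≤ a (n + 1) ^ 2)
    (r : ℝ) (n : ℕ) : a n * r ^ n * (a (n + 2) * r ^ (n + 2)) ≤ (a (n + 1) * r ^ (n + 1)) ^ 2 :=
  calc a n * r ^ n * (a (n + 2) * r ^ (n + 2)) = a n * a (n + 2) * (r ^ (n + 1)) ^ 2 := by ring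
    _ ≤ a (n + 1) ^ 2 * (r ^ (n + 1)) ^ 2 := by gcongr; exact hconc n
    _ = (a (n + 1) * r ^ (n + 1)) ^ 2 := by ring

/-- For a log-concave positive coefficient sequence with `a₀ = 1`, the quantity
`S(r) = 2 Σ_{n : aₙ rⁿ ≥ 1} log (aₙ rⁿ)` satisfies
`(N₁(r) - 1) log μ(r) ≤ S(r) ≤ 2 N₁(r) log μ(r)`. -/
theorem stmt7 (a : ℕ → ℝ) (ha : ∀ n, 0 < a n) (ha0 : a 0 = 1)
    (hlogconc : ∀ n : ℕ, a n * a (n + 2) ≤ a (n + 1) ^ 2)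
    (hdecay : Tendsto (fun n : ℕ => Real.log (a n) / n) atTop atBot)
    (r : ℝ) (hr : 1 ≤ r)
    (μ : ℝ) (hμmax : ∀ n : ℕ, a n * r ^ n ≤ μ) (hμatt : ∃ n : ℕ, a n * r ^ n = μ)
    (N₁ : Set ℕ) (hN₁ : N₁ = {n : ℕ | 1 ≤ a n * r ^ n})
    (S : ℝ)
    (hS : S = 2 * ∑' n : ℕ, Set.indicator N₁ (fun n => Real.log (a n * r ^ n)) n) :
    ((N₁.ncard : ℝ) - 1) * Real.log μ ≤ S ∧ S ≤ 2 * (N₁.ncard : ℝ) * Real.log μ := by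
  have hr0 : 0 < r := by linarith
  have hpos : ∀ n, 0 < a n * r ^ n := fun n => mul_pos (ha n) (pow_pos hr0 n)
  set b : ℕ → ℝ := fun n => Real.log (a n * r ^ n)
  have hconc : Antitone fun n => b (n + 1) - b n :=
    antitone_log_sub_of_log_concave hpos (mul_pow_log_concave hlogconc r)
  have hb0 : b 0 = 0 := by simp [b, ha0]
  obtain ⟨m, hm⟩ := exists_setOf_nonneg_eq_Iic hconc hb0.ge
    (eventually_log_mul_pow_neg ha hr0 hdecay).exists
  have hmem : ∀ n, 0 ≤ b n ↔ n ≤ m := fun n => Set.ext_iff.1 hm n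
  have hN : N₁ = ↑(range (m + 1)) := by
    ext n
    rw [coe_range, Set.mem_Iio, Nat.lt_succ_iff, ← hmem, hN₁]
    exact (Real.log_nonneg_iff (hpos n)).symm
  obtain ⟨ν, rfl⟩ := hμatt
  have hmax : ∀ n, b n ≤ b ν := fun n => Real.log_le_log (hpos n) (hμmax n)
  have hsum : ∑' n, N₁.indicator b n = ∑ k ∈ range (m + 1), b k := by
    rw [hN, ← _root_.tsum_subtype]
    exact Finset.tsum_subtype _ b
  rw [hS, hsum, hN, Set.ncard_coe_finset, card_range]
  push_cast
  refine ⟨?_, ?_⟩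
  · have hνm : ν ≤ m := (hmem ν).1 (hb0 ▸ hmax 0)
    simpa using mul_le_two_mul_sum_range hconc hb0.ge ((hmem m).2 le_rfl) hνm
  · have hupper := sum_le_card_nsmul (range (m + 1)) b (b ν) fun n _ => hmax n
    rw [card_range, nsmul_eq_mul, Nat.cast_succ] at hupper
    linarith
end

section
/- Let s > 0, t > 0, and N ≥ 1 an integer with log(t^N / s) ≥ N. Define C_N = { (r₁,…,r_N) ∈ ℝ^N : 0 ≤ r_j ≤ t for all j, and ∏_{j=1}^N r_j ≤ s }. Then the Lebesgue measure of C_N satisfies vol(C_N) ≤ (s / (N-1)!) · log^N(t^N / s). -/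
/-!
Write `E_N(L) = ∑_{k<N} L^k / k!` (`expPartialSum`) and `C_N(s)` for `prodLeBox N t s`.
For `0 < s < t^N`, `vol C_N(s) ≤ s · E_N(log (t^N / s))`, by induction on `N` (the base `N = 0`
is an empty box, thanks to the strict inequality). Slicing `C_{N+1}(s)` along the first
coordinate `a`, the slice is contained in the cube `[0,t]^N` for `a ≤ s / t^N`, contributing `s`,
and is `C_N(s / a)` above it; there the induction hypothesis is `(s / a) · E_N(log (a t^N / s))`,
whose primitive is `s · E_{N+1}(log (a t^N / s))`. Finally `E_N(L) ≤ L^N / (N-1)!` for `N ≤ L`,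
inductively: `L^N / (N-1)! + L^N / N! = (N+1) L^N / N! ≤ L^(N+1) / N!`.
-/

open MeasureTheory Set Real
open scoped Nat

noncomputable def expPartialSum (n : ℕ) (x : ℝ) : ℝ := ∑ k ∈ Finset.range n, x ^ k / k !

lemma expPartialSum_succ (n : ℕ) (x : ℝ) :
    expPartialSum (n + 1) x = expPartialSum n x + x ^ n / n ! :=
  Finset.sum_range_succ _ _

lemma expPartialSum_succ_zero (n : ℕ) : expPartialSum (n + 1) 0 = 1 := by
  simp [expPartialSum, Finset.sum_range_succ']

lemma expPartialSum_nonneg (n : ℕ) {x : ℝ} (hx : 0 ≤ x) : 0 ≤ expPartialSum n x :=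
  Finset.sum_nonneg fun _ _ => by positivity

lemma one_le_expPartialSum_succ (n : ℕ) {x : ℝ} (hx : 0 ≤ x) : 1 ≤ expPartialSum (n + 1) x := by
  simpa [expPartialSum] using Finset.single_le_sum (f := fun k => x ^ k / k !)
    (fun _ _ => by positivity) (Finset.mem_range.2 n.succ_pos)

lemma continuous_expPartialSum (n : ℕ) : Continuous (expPartialSum n) := by
  unfold expPartialSum; fun_prop

lemma hasDerivAt_expPartialSum_succ (n : ℕ) (x : ℝ) :
    HasDerivAt (expPartialSum (n + 1)) (expPartialSum n x) x := by
  induction n with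
  | zero =>
    have h : expPartialSum 1 = fun _ => 1 := funext fun y => by simp [expPartialSum]
    simpa [h, expPartialSum] using hasDerivAt_const x (1 : ℝ)
  | succ n ih =>
    rw [show expPartialSum (n + 1 + 1) = fun y => expPartialSum (n + 1) y + y ^ (n + 1) / (n + 1)!
      from funext fun y => expPartialSum_succ (n + 1) y]
    refine (ih.add ((hasDerivAt_pow (n + 1) x).div_const _)).congr_deriv ?_
    rw [expPartialSum_succ, Nat.factorial_succ]
    push_cast
    field_simp

lemma expPartialSum_succ_le (n : ℕ) {L : ℝ} (hL : (n + 1 : ℕ) ≤ L) :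
    expPartialSum (n + 1) L ≤ L ^ (n + 1) / n ! := by
  induction n with
  | zero => simpa [expPartialSum] using hL
  | succ n ih =>
    have hL0 : 0 ≤ L := le_trans (Nat.cast_nonneg _) hL
    have ih := ih (le_trans (by push_cast; linarith) hL)
    calc expPartialSum (n + 1 + 1) L
        ≤ L ^ (n + 1) / n ! + L ^ (n + 1) / (n + 1)! := by
          rw [expPartialSum_succ]; gcongr
      _ = (n + 2 : ℕ) * L ^ (n + 1) / (n + 1)! := by
          rw [Nat.factorial_succ]; push_cast; field_simp; ring
      _ ≤ L * L ^ (n + 1) / (n + 1)! := by gcongr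
      _ = L ^ (n + 1 + 1) / (n + 1)! := by ring

lemma hasDerivAt_mul_expPartialSum_log_div (n : ℕ) (s : ℝ) {a x : ℝ} (ha : 0 < a) (hx : 0 < x) :
    HasDerivAt (fun y => s * expPartialSum (n + 1) (log (y / a)))
      (s / x * expPartialSum n (log (x / a))) x := by
  have hlog := ((hasDerivAt_id x).div_const a).log (div_pos hx ha).ne'
  refine (((hasDerivAt_expPartialSum_succ n _).comp x hlog).const_mul s).congr_deriv ?_
  simp only [id]
  field_simp

lemma continuousOn_div_mul_expPartialSum_log_div (n : ℕ) (s : ℝ) {a b : ℝ} (ha : 0 < a) :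
    ContinuousOn (fun x => s / x * expPartialSum n (log (x / a))) (Icc a b) := by
  have := continuous_expPartialSum n
  intro x hx
  have hx : x ≠ 0 := (ha.trans_le hx.1).ne'
  exact ContinuousAt.continuousWithinAt (by fun_prop (disch := positivity))

lemma integral_div_mul_expPartialSum_log_div (n : ℕ) (s : ℝ) {a b : ℝ} (ha : 0 < a) (hab : a ≤ b) :
    ∫ x in a..b, s / x * expPartialSum n (log (x / a)) =
      s * (expPartialSum (n + 1) (log (b / a)) - 1) := by
  rw [intervalIntegral.integral_eq_sub_of_hasDerivAt
    (fun x hx => hasDerivAt_mul_expPartialSum_log_div n s ha (ha.trans_le (uIcc_of_le hab ▸ hx).1))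
    ((continuousOn_div_mul_expPartialSum_log_div n s ha).intervalIntegrable_of_Icc hab)]
  rw [div_self ha.ne', log_one, expPartialSum_succ_zero]
  ring

lemma setLIntegral_ofReal_div_mul_expPartialSum_log_div (n : ℕ) {s a b : ℝ} (hs : 0 ≤ s)
    (ha : 0 < a) (hab : a ≤ b) :
    ∫⁻ x in Ioc a b, ENNReal.ofReal (s / x * expPartialSum n (log (x / a))) =
      ENNReal.ofReal (s * (expPartialSum (n + 1) (log (b / a)) - 1)) := by
  rw [← integral_div_mul_expPartialSum_log_div n s ha hab, intervalIntegral.integral_of_le hab,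
    ofReal_integral_eq_lintegral_ofReal]
  · exact ((continuousOn_div_mul_expPartialSum_log_div n s ha).integrableOn_Icc).mono_set
      Ioc_subset_Icc_self
  · refine (ae_restrict_iff' measurableSet_Ioc).2 (ae_of_all _ fun x hx => ?_)
    have hax : 1 ≤ x / a := (one_le_div ha).2 hx.1.le
    exact mul_nonneg (div_nonneg hs (ha.trans hx.1).le) (expPartialSum_nonneg n (log_nonneg hax))

def prodLeBox (N : ℕ) (t s : ℝ) : Set (Fin N → ℝ) :=
  {x | (∀ j, 0 ≤ x j ∧ x j ≤ t) ∧ ∏ j, x j ≤ s}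

lemma measurableSet_prodLeBox (N : ℕ) (t s : ℝ) : MeasurableSet (prodLeBox N t s) := by
  unfold prodLeBox; measurability

lemma volume_le_of_forall_mem_Icc {ι : Type*} [Fintype ι] {t : ℝ} {A : Set (ι → ℝ)}
    (hA : ∀ y ∈ A, ∀ j, 0 ≤ y j ∧ y j ≤ t) :
    volume A ≤ ENNReal.ofReal t ^ Fintype.card ι := by
  calc volume A ≤ volume (Icc (0 : ι → ℝ) fun _ => t) :=
        measure_mono fun y hy => ⟨fun j => (hA y hy j).1, fun j => (hA y hy j).2⟩
    _ = ENNReal.ofReal t ^ Fintype.card ι := by simp [Real.volume_Icc_pi]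

lemma setOf_mul_prod_le_eq_prodLeBox (N : ℕ) (t s : ℝ) {a : ℝ} (ha : 0 < a) :
    {y : Fin N → ℝ | (∀ j, 0 ≤ y j ∧ y j ≤ t) ∧ a * ∏ j, y j ≤ s} = prodLeBox N t (s / a) := by
  ext y
  simp only [prodLeBox, mem_ofPred_eq, le_div_iff₀' ha]

lemma volume_prodLeBox_succ (N : ℕ) (t s : ℝ) :
    volume (prodLeBox (N + 1) t s) = ∫⁻ a in Ioc 0 t, volume (prodLeBox N t (s / a)) := by
  let e := (MeasurableEquiv.piFinSuccAbove (fun _ : Fin (N + 1) => ℝ) 0).symm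
  have he : e ⁻¹' prodLeBox (N + 1) t s =
      {p | (0 ≤ p.1 ∧ p.1 ≤ t) ∧ (∀ j, 0 ≤ p.2 j ∧ p.2 j ≤ t) ∧ p.1 * ∏ j, p.2 j ≤ s} := by
    ext ⟨a, y⟩
    simp [e, prodLeBox, Fin.forall_fin_succ, Fin.prod_univ_succ, and_assoc]
  rw [← (volume_preserving_piFinSuccAbove (fun _ : Fin (N + 1) => ℝ) 0).symm.measure_preimage_equiv,
    Measure.volume_eq_prod, Measure.prod_apply (e.measurable (measurableSet_prodLeBox _ _ _)),
    ← lintegral_indicator measurableSet_Ioc]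
  -- at `a = 0` the slice is the whole cube, not `prodLeBox N t (s / 0)`
  refine lintegral_congr_ae ?_
  filter_upwards [Measure.ae_ne volume (0 : ℝ)] with a ha0
  by_cases ha : a ∈ Ioc 0 t
  · rw [indicator_of_mem ha, ← setOf_mul_prod_le_eq_prodLeBox N t s ha.1]
    simp [he, ha.1.le, ha.2]
  · have ha' : ¬(0 ≤ a ∧ a ≤ t) := fun h => ha ⟨h.1.lt_of_ne' ha0, h.2⟩
    simp [he, ha, ha']

theorem volume_prodLeBox_le (N : ℕ) {t s : ℝ} (ht : 0 < t) (hs : 0 < s) (hst : s < t ^ N) :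
    volume (prodLeBox N t s) ≤ ENNReal.ofReal (s * expPartialSum N (log (t ^ N / s))) := by
  induction N generalizing s with
  | zero =>
    rw [pow_zero] at hst
    have : prodLeBox 0 t s = ∅ := by simp [prodLeBox, hst.not_ge]
    simp [this]
  | succ N ih =>
    have htN : 0 < t ^ N := pow_pos ht N
    set a₀ := s / t ^ N with ha₀_def
    have ha₀ : 0 < a₀ := div_pos hs htN
    have ha₀t : a₀ ≤ t := by rw [div_le_iff₀ htN, ← pow_succ']; exact hst.le
    have hslice_small : ∀ a ∈ Ioc 0 a₀, volume (prodLeBox N t (s / a)) ≤ ENNReal.ofReal t ^ N :=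
      fun a _ => by simpa using volume_le_of_forall_mem_Icc fun y (hy : y ∈ prodLeBox _ _ _) => hy.1
    have hslice_large : ∀ a ∈ Ioc a₀ t, volume (prodLeBox N t (s / a)) ≤
        ENNReal.ofReal (s / a * expPartialSum N (log (a / a₀))) := fun a ha => by
      have ha0 : 0 < a := ha₀.trans ha.1
      convert ih (div_pos hs ha0) ((div_lt_iff₀' ha0).2 ((div_lt_iff₀ htN).1 ha.1)) using 4
      rw [ha₀_def]
      field_simp
    calc volume (prodLeBox (N + 1) t s)
        = ∫⁻ a in Ioc 0 t, volume (prodLeBox N t (s / a)) := volume_prodLeBox_succ N t s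
      _ = (∫⁻ a in Ioc 0 a₀, volume (prodLeBox N t (s / a))) +
            ∫⁻ a in Ioc a₀ t, volume (prodLeBox N t (s / a)) := by
          rw [← Ioc_union_Ioc_eq_Ioc ha₀.le ha₀t]
          exact lintegral_union measurableSet_Ioc (Ioc_disjoint_Ioc_of_le le_rfl)
      _ ≤ (∫⁻ _ in Ioc 0 a₀, ENNReal.ofReal t ^ N) +
            ∫⁻ a in Ioc a₀ t, ENNReal.ofReal (s / a * expPartialSum N (log (a / a₀))) :=
          add_le_add (setLIntegral_mono' measurableSet_Ioc hslice_small)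
            (setLIntegral_mono' measurableSet_Ioc hslice_large)
      _ = ENNReal.ofReal s + ENNReal.ofReal (s * (expPartialSum (N + 1) (log (t / a₀)) - 1)) := by
          rw [setLIntegral_ofReal_div_mul_expPartialSum_log_div N hs.le ha₀ ha₀t,
            setLIntegral_const, Real.volume_Ioc, ← ENNReal.ofReal_pow ht.le, ← ENNReal.ofReal_mul htN.le, ha₀_def]
          congr 2
          field_simp
          ring
      _ = ENNReal.ofReal (s * expPartialSum (N + 1) (log (t ^ (N + 1) / s))) := by
          have h1 := one_le_expPartialSum_succ N (log_nonneg ((one_le_div ha₀).2 ha₀t))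
          rw [← ENNReal.ofReal_add hs.le (by nlinarith), ha₀_def, div_div_eq_mul_div, ← pow_succ']
          ring_nf

/-- Volume estimate: for `s, t > 0`, `N ≥ 1` with `log (t^N / s) ≥ N`, the region
`C_N = {r ∈ ℝ^N : 0 ≤ r_j ≤ t, ∏ r_j ≤ s}` has Lebesgue measure at most
`(s / (N-1)!) · log^N (t^N / s)`. -/
theorem stmt11 (N : ℕ) (hN : 1 ≤ N) (s t : ℝ) (hs : 0 < s) (ht : 0 < t)
    (hlog : (N : ℝ) ≤ Real.log (t ^ N / s)) :
    volume {x : Fin N → ℝ | (∀ j, 0 ≤ x j ∧ x j ≤ t) ∧ ∏ j, x j ≤ s} ≤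
      ENNReal.ofReal (s / (N - 1).factorial * Real.log (t ^ N / s) ^ N) := by
  obtain ⟨n, rfl⟩ := Nat.exists_eq_add_of_le' hN
  have hst : s < t ^ (n + 1) := by
    have : 0 < log (t ^ (n + 1) / s) := lt_of_lt_of_le (by positivity) hlog
    exact (one_lt_div hs).1 ((log_pos_iff (by positivity)).1 this)
  refine (volume_prodLeBox_le (n + 1) ht hs hst).trans (ENNReal.ofReal_le_ofReal ?_)
  rw [Nat.add_sub_cancel, mul_comm_div]
  exact mul_le_mul_of_nonneg_left (expPartialSum_succ_le n hlog) hs.le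
end

section
/- Let u be harmonic on a neighborhood of the closed disk |z| ≤ r, and suppose u(a) ≥ 0 for some a with |a| = κr, 0 < κ < 1. Then ∫_{|z|=r} u⁻(z) dm(z) ≤ (2/δ)²·∫_{|z|=r} u⁺(z) dm(z), where δ = 1 - κ, u⁺ = max(u,0), u⁻ = max(-u,0), and m is normalized arclength measure on |z| = r. Consequently ∫ |u| dm ≤ (1 + 4/δ²)·∫ u⁺ dm. -/
/-!
By the Poisson formula, `0 ≤ u a = ⨍ P(z, a) u(z) dm(z) = ⨍ P u⁺ dm - ⨍ P u⁻ dm`. On the circle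
`|z| = r` the Poisson kernel for `|a| = κ r` satisfies the Harnack bounds
`M⁻¹ ≤ P(z, a) ≤ M` with `M = (1 + κ) / (1 - κ) ≤ 2 / δ`, so
`M⁻¹ ⨍ u⁻ ≤ ⨍ P u⁻ ≤ ⨍ P u⁺ ≤ M ⨍ u⁺`. The bound for `|u| = u⁺ + u⁻` follows.
-/

open Real MeasureTheory Metric InnerProductSpace

section PoissonKernel

variable {c w z : ℂ} {R : ℝ}

lemma le_poissonKernel (hz : z ∈ sphere c R) (hw : w ∈ ball c R) :
    (R - ‖w - c‖) / (R + ‖w - c‖) ≤ poissonKernel c w z := by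
  simpa [poissonKernel_eq_re_herglotzRieszKernel, herglotzRieszKernel_def] using
    le_re_herglotzRieszKernel hz hw

lemma poissonKernel_le (hz : z ∈ sphere c R) (hw : w ∈ ball c R) :
    poissonKernel c w z ≤ (R + ‖w - c‖) / (R - ‖w - c‖) := by
  simpa [poissonKernel_eq_re_herglotzRieszKernel, herglotzRieszKernel_def] using
    re_herglotzRieszKernel_le hz hw

lemma continuousOn_poissonKernel_sphere (hw : w ∈ ball c R) :
    ContinuousOn (poissonKernel c w) (sphere c |R|) := by
  rw [poissonKernel_eq_re_herglotzRieszKernel]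
  exact Complex.continuous_re.comp_continuousOn (continuousOn_herglotzRieszKernel_sphere hw)

lemma circleIntegrable_poissonKernel_smul {g : ℂ → ℝ} (hg : ContinuousOn g (closedBall c R))
    (hw : w ∈ ball c R) : CircleIntegrable (poissonKernel c w • g) c R := by
  have hR : 0 ≤ R := (pos_of_mem_ball hw).le
  have hP := continuousOn_poissonKernel_sphere hw
  rw [abs_of_nonneg hR] at hP
  exact (hP.smul (hg.mono sphere_subset_closedBall)).circleIntegrable hR

end PoissonKernel

namespace InnerProductSpace.HarmonicOnNhd

variable {f : ℂ → ℝ} {s : Set ℂ} {c w : ℂ} {R : ℝ}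

lemma continuousOn_posPart (hf : HarmonicOnNhd f s) : ContinuousOn f⁺ s :=
  hf.continuousOn.sup continuousOn_const

lemma continuousOn_negPart (hf : HarmonicOnNhd f s) : ContinuousOn f⁻ s :=
  hf.continuousOn.neg.sup continuousOn_const

lemma circleAverage_poissonKernel_smul_negPart_le (hf : HarmonicOnNhd f (closedBall c R))
    (hw : w ∈ ball c R) (hfw : 0 ≤ f w) :
    circleAverage (poissonKernel c w • f⁻) c R ≤ circleAverage (poissonKernel c w • f⁺) c R := by
  have hsplit : poissonKernel c w • f = poissonKernel c w • f⁺ - poissonKernel c w • f⁻ := by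
    rw [← smul_sub, posPart_sub_negPart]
  have := hf.circleAverage_poissonKernel_smul hw
  rw [hsplit, circleAverage_sub
    (circleIntegrable_poissonKernel_smul hf.continuousOn_posPart hw)
    (circleIntegrable_poissonKernel_smul hf.continuousOn_negPart hw)] at this
  linarith

theorem circleAverage_negPart_le (hf : HarmonicOnNhd f (closedBall c R))
    (hw : w ∈ ball c R) (hfw : 0 ≤ f w) :
    circleAverage f⁻ c R ≤ ((R + ‖w - c‖) / (R - ‖w - c‖)) ^ 2 * circleAverage f⁺ c R := by
  have hR : 0 < R := pos_of_mem_ball hw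
  have hwR : ‖w - c‖ < R := mem_ball_iff_norm.mp hw
  set M := (R + ‖w - c‖) / (R - ‖w - c‖)
  have hM : 0 < M := div_pos (by positivity) (by linarith)
  have hMinv : M⁻¹ = (R - ‖w - c‖) / (R + ‖w - c‖) := inv_div _ _
  have hpos := hf.continuousOn_posPart
  have hneg := hf.continuousOn_negPart
  have hint {g : ℂ → ℝ} (hg : ContinuousOn g (closedBall c R)) : CircleIntegrable g c R :=
    (hg.mono sphere_subset_closedBall).circleIntegrable hR.le
  have hlow : M⁻¹ * circleAverage f⁻ c R ≤ circleAverage (poissonKernel c w • f⁻) c R := by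
    rw [← smul_eq_mul, ← circleAverage_smul]
    refine circleAverage_mono (hint hneg).const_smul
      (circleIntegrable_poissonKernel_smul hneg hw) fun z hz ↦ ?_
    rw [abs_of_pos hR] at hz
    rw [hMinv]
    exact mul_le_mul_of_nonneg_right (le_poissonKernel hz hw) (negPart_nonneg _)
  have hup : circleAverage (poissonKernel c w • f⁺) c R ≤ M * circleAverage f⁺ c R := by
    rw [← smul_eq_mul, ← circleAverage_smul]
    refine circleAverage_mono (circleIntegrable_poissonKernel_smul hpos hw)
      (hint hpos).const_smul fun z hz ↦ ?_
    rw [abs_of_pos hR] at hz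
    exact mul_le_mul_of_nonneg_right (poissonKernel_le hz hw) (posPart_nonneg _)
  have := (hlow.trans (circleAverage_poissonKernel_smul_negPart_le hf hw hfw)).trans hup
  rw [inv_mul_le_iff₀ hM] at this
  linarith

theorem circleAverage_abs_le (hf : HarmonicOnNhd f (closedBall c R))
    (hw : w ∈ ball c R) (hfw : 0 ≤ f w) :
    circleAverage |f| c R ≤ (1 + ((R + ‖w - c‖) / (R - ‖w - c‖)) ^ 2) * circleAverage f⁺ c R := by
  have hR : 0 < R := pos_of_mem_ball hw
  have hint {g : ℂ → ℝ} (hg : ContinuousOn g (closedBall c R)) : CircleIntegrable g c R :=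
    (hg.mono sphere_subset_closedBall).circleIntegrable hR.le
  have hpos := hf.continuousOn_posPart
  have hneg := hf.continuousOn_negPart
  rw [← posPart_add_negPart, circleAverage_add (hint hpos) (hint hneg)]
  linarith [hf.circleAverage_negPart_le hw hfw]

end InnerProductSpace.HarmonicOnNhd

theorem DifferentiableOn.harmonicOnNhd_of_eqOn_re {U : Set ℂ} {F : ℂ → ℂ}
    (hF : DifferentiableOn ℂ F U) (hU : IsOpen U) {u : ℂ → ℝ}
    (hu : Set.EqOn u (fun z ↦ (F z).re) U) : HarmonicOnNhd u U := fun _ hz ↦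
  (harmonicAt_congr_nhds (Filter.eventually_of_mem (hU.mem_nhds hz) hu)).2
    (hF.analyticAt (hU.mem_nhds hz)).harmonicAt_re

theorem stmt13_general (r κ δ : ℝ) (hr : 0 < r) (hκ1 : κ < 1) (hδ : δ = 1 - κ)
    (u : ℂ → ℝ)
    (hharm : ∃ r' > r, ∃ F : ℂ → ℂ, DifferentiableOn ℂ F (Metric.ball 0 r') ∧
      ∀ z ∈ Metric.ball (0 : ℂ) r', u z = (F z).re)
    (a : ℂ) (ha : ‖a‖ = κ * r) (hua : 0 ≤ u a) :
    (1 / (2 * π)) * ∫ θ in (0 : ℝ)..(2 * π), max (-(u (circleMap 0 r θ))) 0 ≤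
      (2 / δ) ^ 2 * ((1 / (2 * π)) * ∫ θ in (0 : ℝ)..(2 * π), max (u (circleMap 0 r θ)) 0) ∧
    (1 / (2 * π)) * ∫ θ in (0 : ℝ)..(2 * π), |u (circleMap 0 r θ)| ≤
      (1 + 4 / δ ^ 2) * ((1 / (2 * π)) * ∫ θ in (0 : ℝ)..(2 * π), max (u (circleMap 0 r θ)) 0) := by
  obtain ⟨r', hr', F, hF, hFu⟩ := hharm
  have hu : HarmonicOnNhd u (closedBall 0 r) :=
    (hF.harmonicOnNhd_of_eqOn_re isOpen_ball hFu).mono (closedBall_subset_ball hr')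
  have ha' : ‖a‖ < r := by rw [ha]; nlinarith
  have hM : (r + ‖a‖) / (r - ‖a‖) ≤ 2 / δ := by
    rw [div_le_div_iff₀ (by linarith) (by linarith), hδ, ha]
    nlinarith
  have hM2 : ((r + ‖a‖) / (r - ‖a‖)) ^ 2 ≤ (2 / δ) ^ 2 :=
    pow_le_pow_left₀ (div_nonneg (by positivity) (by linarith)) hM 2
  have hpos : 0 ≤ circleAverage u⁺ 0 r :=
    circleAverage_nonneg_of_nonneg fun z _ ↦ posPart_nonneg (u z)
  have hsq : (2 / δ) ^ 2 = 4 / δ ^ 2 := by norm_num [div_pow]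
  have hneg := hu.circleAverage_negPart_le (mem_ball_zero_iff.2 ha') hua
  have habs := hu.circleAverage_abs_le (mem_ball_zero_iff.2 ha') hua
  rw [sub_zero] at hneg habs
  replace hneg : circleAverage u⁻ 0 r ≤ (2 / δ) ^ 2 * circleAverage u⁺ 0 r :=
    hneg.trans (by gcongr)
  replace habs : circleAverage |u| 0 r ≤ (1 + 4 / δ ^ 2) * circleAverage u⁺ 0 r :=
    habs.trans (by rw [← hsq]; gcongr)
  have hav (g : ℂ → ℝ) :
      circleAverage g 0 r = 1 / (2 * π) * ∫ θ in (0 : ℝ)..(2 * π), g (circleMap 0 r θ) := by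
    rw [circleAverage_def, smul_eq_mul, one_div]
  rw [hav, hav] at hneg habs
  exact ⟨hneg, habs⟩

/-- Let `u` be harmonic on a neighborhood of the closed disk `|z| ≤ r` (realized as the
real part of a holomorphic function on a larger ball) with `u a ≥ 0` at some point `a`
with `|a| = κr`, `0 < κ < 1`. Then with `δ = 1 - κ`,
`∫ u⁻ dm ≤ (2/δ)² ∫ u⁺ dm` and `∫ |u| dm ≤ (1 + 4/δ²) ∫ u⁺ dm`,
where `m` is the normalized angular measure on `|z| = r`. -/
theorem stmt13 (r κ δ : ℝ) (hr : 0 < r) (hκ0 : 0 < κ) (hκ1 : κ < 1) (hδ : δ = 1 - κ)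
    (u : ℂ → ℝ)
    (hharm : ∃ r' > r, ∃ F : ℂ → ℂ, DifferentiableOn ℂ F (Metric.ball 0 r') ∧
      ∀ z ∈ Metric.ball (0 : ℂ) r', u z = (F z).re)
    (a : ℂ) (ha : ‖a‖ = κ * r) (hua : 0 ≤ u a) :
    (1 / (2 * π)) * ∫ θ in (0 : ℝ)..(2 * π), max (-(u (circleMap 0 r θ))) 0 ≤
      (2 / δ) ^ 2 * ((1 / (2 * π)) * ∫ θ in (0 : ℝ)..(2 * π), max (u (circleMap 0 r θ)) 0) ∧
    (1 / (2 * π)) * ∫ θ in (0 : ℝ)..(2 * π), |u (circleMap 0 r θ)| ≤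
      (1 + 4 / δ ^ 2) * ((1 / (2 * π)) * ∫ θ in (0 : ℝ)..(2 * π), max (u (circleMap 0 r θ)) 0) :=
  stmt13_general r κ δ hr hκ1 hδ u hharm a ha hua
end

section
/- Let z_j = κr·e^{2πij/N}, j = 1,…,N, and let P_j(z) = P(z, z_j) be the Poisson kernel of the disk |z| < r. Then for every z with |z| = r, |(1/N)·Σ_{j=1}^N P_j(z) - 1| ≤ C/(δ²N), where δ = 1 - κ ∈ (0,1) and C is an absolute constant. -/
/-!
The average is computed exactly. Writing `a = κr` and `ζ = e^{2πi/N}`, each kernel value is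
`Re ((z + aζʲ)/(z - aζʲ))`, and the points `aζʲ` are the roots of `X^N - a^N`, so summing
`1/(z - aζʲ)` gives the logarithmic derivative `N z^{N-1}/(z^N - a^N)`. Hence the average equals
`Re ((z^N + a^N)/(z^N - a^N))`, which differs from `1` by at most `2κ^N/(1 - κ^N)`; this is
exponentially small in `N`, and `κ^N ≤ e^{-Nδ} ≤ 1/(Nδ)` turns it into `2/(δ²N)`.
-/

open Real Polynomial Finset

theorem IsPrimitiveRoot.sum_one_div_sub_pow_mul {K : Type*} [Field K] {N : ℕ} {ζ : K}
    (hζ : IsPrimitiveRoot ζ N) {a x : K} (hx : x ^ N ≠ a ^ N) :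
    ∑ i ∈ range N, 1 / (x - ζ ^ i * a) = N * x ^ (N - 1) / (x ^ N - a ^ N) := by
  have hsplit := X_pow_sub_C_splits_of_isPrimitiveRoot hζ (rfl : a ^ N = a ^ N)
  have key := hsplit.eval_derivative_div_eval_of_ne_zero (x := x)
    (by simpa [sub_eq_zero] using hx)
  rw [← nthRoots, hζ.nthRoots_eq rfl, derivative_sub, derivative_X_pow, derivative_C] at key
  simpa [Finset.sum_eq_multiset_sum] using key.symm

theorem IsPrimitiveRoot.sum_add_div_sub_pow_mul {K : Type*} [Field K] {N : ℕ} {ζ : K}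
    (hζ : IsPrimitiveRoot ζ N) (hN : N ≠ 0) {a x : K} (hx : x ^ N ≠ a ^ N) :
    ∑ i ∈ range N, (x + ζ ^ i * a) / (x - ζ ^ i * a) =
      N * (x ^ N + a ^ N) / (x ^ N - a ^ N) := by
  have hne : ∀ i, x - ζ ^ i * a ≠ 0 := fun i h ↦ hx <| by
    rw [sub_eq_zero.mp h, mul_pow, ← pow_mul, mul_comm i, pow_mul, hζ.pow_eq_one, one_pow,
      one_mul]
  have hsplit : ∀ i, (x + ζ ^ i * a) / (x - ζ ^ i * a) = 2 * x * (1 / (x - ζ ^ i * a)) - 1 :=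
    fun i ↦ by field_simp [hne i]; ring
  have hpow : x * x ^ (N - 1) = x ^ N := by rw [← pow_succ', Nat.sub_add_cancel (by omega)]
  simp only [hsplit, sum_sub_distrib, ← mul_sum, hζ.sum_one_div_sub_pow_mul hx, sum_const,
    card_range, nsmul_eq_mul, mul_one]
  field_simp
  linear_combination (2 * (N : K)) * hpow

theorem Complex.re_add_div_sub (z w : ℂ) :
    ((z + w) / (z - w)).re = (‖z‖ ^ 2 - ‖w‖ ^ 2) / ‖z - w‖ ^ 2 := by
  simp only [Complex.div_re, Complex.sq_norm, ← add_div, Complex.normSq_apply, Complex.add_re,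
    Complex.add_im, Complex.sub_re, Complex.sub_im]
  ring_nf

theorem IsPrimitiveRoot.sum_poisson_eq {N : ℕ} {ζ : ℂ} (hζ : IsPrimitiveRoot ζ N)
    (hN : N ≠ 0) {a z : ℂ} (hz : z ^ N ≠ a ^ N) :
    ∑ j : Fin N, (‖z‖ ^ 2 - ‖a * ζ ^ (j : ℕ)‖ ^ 2) / ‖z - a * ζ ^ (j : ℕ)‖ ^ 2 =
      N * ((z ^ N + a ^ N) / (z ^ N - a ^ N)).re := by
  simp_rw [← Complex.re_add_div_sub, mul_comm a]
  rw [← Complex.re_sum, Fin.sum_univ_eq_sum_range (fun i ↦ (z + ζ ^ i * a) / (z - ζ ^ i * a)),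
    hζ.sum_add_div_sub_pow_mul hN hz, mul_div_assoc, ← Complex.ofReal_natCast,
    Complex.re_ofReal_mul]

theorem norm_add_div_sub_sub_one_le {u v : ℂ} (h : ‖v‖ < ‖u‖) :
    ‖(u + v) / (u - v) - 1‖ ≤ 2 * ‖v‖ / (‖u‖ - ‖v‖) := by
  have huv : u - v ≠ 0 := fun h0 ↦ by rw [sub_eq_zero.mp h0] at h; exact lt_irrefl _ h
  have hsub : (u + v) / (u - v) - 1 = 2 * v / (u - v) := by field_simp; ring
  rw [hsub, norm_div, norm_mul, Complex.norm_two]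
  exact div_le_div_of_nonneg_left (by positivity) (sub_pos.mpr h) (norm_sub_norm_le u v)

theorem abs_re_add_div_sub_sub_one_le {u v : ℂ} {κ : ℝ} (hκ : κ < 1) (hu : u ≠ 0)
    (hv : ‖v‖ = κ * ‖u‖) : |((u + v) / (u - v)).re - 1| ≤ 2 * (κ / (1 - κ)) := by
  have hu' : 0 < ‖u‖ := norm_pos_iff.mpr hu
  calc |((u + v) / (u - v)).re - 1| ≤ ‖(u + v) / (u - v) - 1‖ := by
        simpa using Complex.abs_re_le_norm ((u + v) / (u - v) - 1)
    _ ≤ 2 * ‖v‖ / (‖u‖ - ‖v‖) :=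
        norm_add_div_sub_sub_one_le (by rw [hv]; exact mul_lt_of_lt_one_left hu' hκ)
    _ = 2 * (κ / (1 - κ)) := by
        rw [hv, ← one_sub_mul, ← mul_assoc, mul_div_mul_right _ _ hu'.ne', mul_div_assoc]

theorem one_sub_pow_mul_le_one {δ : ℝ} (hδ0 : 0 ≤ δ) (hδ1 : δ ≤ 1) (N : ℕ) :
    (1 - δ) ^ N * (N * δ) ≤ 1 := by
  have hexp : (1 - δ) ^ N ≤ exp (-(N * δ)) := by
    rw [neg_mul_eq_mul_neg, exp_nat_mul]
    exact pow_le_pow_left₀ (by linarith) (one_sub_le_exp_neg δ) N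
  calc (1 - δ) ^ N * (N * δ) ≤ exp (-(N * δ)) * exp (N * δ) := by
        gcongr
        linarith [add_one_le_exp (N * δ)]
    _ = 1 := by rw [← exp_add, neg_add_cancel, exp_zero]

theorem one_sub_pow_div_one_sub_pow_le {δ : ℝ} (hδ0 : 0 < δ) (hδ1 : δ < 1) {N : ℕ}
    (hN : N ≠ 0) : (1 - δ) ^ N / (1 - (1 - δ) ^ N) ≤ 1 / (δ ^ 2 * N) := by
  have hκN : (1 - δ) ^ N ≤ 1 - δ := pow_le_of_le_one (by linarith) (by linarith) hN
  rw [div_le_div_iff₀ (by linarith) (by positivity)]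
  calc (1 - δ) ^ N * (δ ^ 2 * N) = (1 - δ) ^ N * (N * δ) * δ := by ring
    _ ≤ 1 * δ := by gcongr; exact one_sub_pow_mul_le_one hδ0.le hδ1.le N
    _ ≤ 1 * (1 - (1 - δ) ^ N) := by linarith

/-- Discretization error for the Poisson kernel: there is an absolute constant `C > 0`
such that for equally spaced points `z_j = κr e^{2πij/N}` on the circle `|w| = κr`
(`κ = 1 - δ`, `0 < δ < 1`), and every `z` with `|z| = r`,
`|(1/N) Σ_j P(z, z_j) - 1| ≤ C/(δ² N)`, where `P(z,w) = (r² - |w|²)/|z - w|²`. -/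
theorem stmt14 :
    ∃ C > (0 : ℝ), ∀ (N : ℕ), 1 ≤ N → ∀ r δ : ℝ, 0 < r → 0 < δ → δ < 1 →
      ∀ z : ℂ, ‖z‖ = r →
        |(1 / (N : ℝ)) * ∑ j : Fin N,
            (r ^ 2 - ‖((1 - δ) * r : ℝ) *
              Complex.exp (2 * Real.pi * Complex.I * (j : ℕ) / N)‖ ^ 2) /
            ‖z - ((1 - δ) * r : ℝ) *
              Complex.exp (2 * Real.pi * Complex.I * (j : ℕ) / N)‖ ^ 2
          - 1| ≤ C / (δ ^ 2 * N) := by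
  refine ⟨2, two_pos, fun N hN r δ hr hδ0 hδ1 z hz ↦ ?_⟩
  subst hz
  have hN0 : N ≠ 0 := by omega
  set a : ℂ := (((1 - δ) * ‖z‖ : ℝ) : ℂ)
  have hexp (j : ℕ) : Complex.exp (2 * π * Complex.I * j / N) =
      Complex.exp (2 * π * Complex.I / N) ^ j := by
    rw [← Complex.exp_nat_mul]; ring_nf
  have haN : ‖a ^ N‖ = (1 - δ) ^ N * ‖z ^ N‖ := by
    rw [norm_pow, norm_pow, Complex.norm_real, norm_mul, norm_norm, mul_pow,
      Real.norm_of_nonneg (by linarith)]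
  have hκN : (1 - δ) ^ N < 1 := pow_lt_one₀ (by linarith) (by linarith) hN0
  have hzN : z ^ N ≠ 0 := pow_ne_zero N (norm_pos_iff.mp hr)
  have hzaN : z ^ N ≠ a ^ N := fun h ↦ by
    rw [← h] at haN
    exact hκN.ne (mul_eq_right₀ (norm_ne_zero_iff.mpr hzN) |>.mp haN.symm)
  simp_rw [hexp]
  rw [(Complex.isPrimitiveRoot_exp N hN0).sum_poisson_eq hN0 hzaN,
    one_div, inv_mul_cancel_left₀ (by exact_mod_cast hN0 : (N : ℝ) ≠ 0)]
  calc _ ≤ 2 * ((1 - δ) ^ N / (1 - (1 - δ) ^ N)) := abs_re_add_div_sub_sub_one_le hκN hzN haN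
    _ ≤ 2 * (1 / (δ ^ 2 * N)) :=
        mul_le_mul_of_nonneg_left (one_sub_pow_div_one_sub_pow_le hδ0 hδ1 hN0) zero_le_two
    _ = 2 / (δ ^ 2 * N) := mul_one_div 2 _
end

section
/- Let f(z) = Σₙ φₙ aₙ zⁿ with (φₙ) independent standard complex Gaussians, aₙ > 0, a₀ = 1, and the series convergent on |z| ≤ r. Then P( max_{|z|≤r} |f(z)| ≤ 1 ) ≤ ∏_{n : aₙrⁿ ≥ 1} (aₙ rⁿ)⁻² = exp(-S(r)), where S(r) = 2·Σ_{n : aₙrⁿ ≥ 1} log(aₙ rⁿ). -/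
/-!
On the event `max_{|z| ≤ r} |f| ≤ 1`, Cauchy's estimate gives `|φₙ| aₙ rⁿ ≤ 1` for every `n`,
as soon as `Σ |φₙ| aₙ rⁿ` converges; this holds almost surely because `E|φₙ| < ∞` and
`Σ aₙ rⁿ < ∞`.
The standard complex Gaussian density is at most `1/π`, so `P(|φₙ| ≤ λ) ≤ π λ² / π = λ²`, and
independence multiplies these bounds over the finitely many `n` with `aₙ rⁿ ≥ 1`.
-/

open MeasureTheory Real ProbabilityTheory

/-- The law of a standard complex Gaussian random variable. -/
noncomputable def stdComplexGaussian : Measure ℂ :=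
  volume.withDensity (fun z => ENNReal.ofReal ((1 / π) * Real.exp (-(‖z‖) ^ 2)))

open Metric
open scoped ENNReal

lemma stdComplexGaussian_closedBall_le {t : ℝ} (ht : 0 ≤ t) :
    stdComplexGaussian (closedBall 0 t) ≤ ENNReal.ofReal (t ^ 2) := by
  have hdensity : ∀ z : ℂ,
      ENNReal.ofReal ((1 / π) * Real.exp (-‖z‖ ^ 2)) ≤ ENNReal.ofReal (1 / π) := fun z =>
    ENNReal.ofReal_le_ofReal <|
      mul_le_of_le_one_right (by positivity) (exp_le_one_iff.mpr (by nlinarith [norm_nonneg z]))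
  calc stdComplexGaussian (closedBall 0 t)
      ≤ ∫⁻ _ in closedBall (0 : ℂ) t, ENNReal.ofReal (1 / π) := by
        rw [stdComplexGaussian, withDensity_apply _ measurableSet_closedBall]
        exact setLIntegral_mono (by fun_prop) fun z _ => hdensity z
    _ = ENNReal.ofReal (t ^ 2) := by
        rw [setLIntegral_const, Complex.volume_closedBall, ← ENNReal.ofReal_pow ht,
          ← ENNReal.ofReal_coe_nnreal, NNReal.coe_real_pi, ← ENNReal.ofReal_mul (by positivity),
          ← ENNReal.ofReal_mul (by positivity)]
        field_simp

lemma lintegral_enorm_stdComplexGaussian_lt_top :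
    ∫⁻ z, ‖z‖ₑ ∂stdComplexGaussian < ⊤ := by
  have hint : Integrable (fun z : ℂ => ‖z‖ * ((1 / π) * Real.exp (-‖z‖ ^ 2))) := by
    rw [integrable_fun_norm_addHaar volume (f := fun t => t * ((1 / π) * Real.exp (-t ^ 2)))]
    have := (integrableOn_rpow_mul_exp_neg_mul_sq one_pos (s := 2) (by norm_num)).const_mul (1 / π)
    refine IntegrableOn.congr_fun this (fun t _ => ?_) measurableSet_Ioi
    simp only [rpow_ofNat, neg_mul, one_mul, Complex.finrank_real_complex, Nat.add_one_sub_one,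
      pow_one, smul_eq_mul]
    ring
  rw [stdComplexGaussian, lintegral_withDensity_eq_lintegral_mul₀ (by fun_prop) (by fun_prop)]
  refine lt_of_eq_of_lt (lintegral_congr fun z => ?_) hint.hasFiniteIntegral
  rw [Pi.mul_apply, Real.enorm_eq_ofReal (by positivity), ENNReal.ofReal_mul (norm_nonneg z),
    ofReal_norm, mul_comm]

lemma norm_mul_pow_le_of_forall_mem_sphere_norm_tsum_le {c : ℕ → ℂ} {r M : ℝ} (hr : 0 < r)
    (hc : Summable fun n => ‖c n‖ * r ^ n) (hM : ∀ z ∈ sphere (0 : ℂ) r, ‖∑' n, c n * z ^ n‖ ≤ M)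
    (n : ℕ) : ‖c n‖ * r ^ n ≤ M := by
  set p := FormalMultilinearSeries.ofScalars ℂ c
  set f : ℂ → ℂ := fun z => ∑' n, c n * z ^ n
  have hf : p.sum = f := by
    ext z; simp [p, f, FormalMultilinearSeries.sum, mul_comm]
  have hradius : ENNReal.ofReal r ≤ p.radius := by
    refine p.le_radius_of_summable ?_
    simpa [p, Real.coe_toNNReal _ hr.le] using hc
  have hseries : HasFPowerSeriesOnBall f p 0 p.radius :=
    hf ▸ p.hasFPowerSeriesOnBall ((ENNReal.ofReal_pos.mpr hr).trans_le hradius)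
  have hdiff : DiffContOnCl ℂ f (ball 0 r) := by
    refine ⟨hseries.differentiableOn.mono fun z hz => ?_, ?_⟩
    · rw [Metric.mem_eball, edist_zero_right]
      refine lt_of_lt_of_le ?_ hradius
      rw [← ofReal_norm]
      exact (ENNReal.ofReal_lt_ofReal_iff hr).mpr (mem_ball_zero_iff.mp hz)
    · rw [closure_ball 0 hr.ne']
      refine continuousOn_tsum (fun n => by fun_prop) hc fun n z hz => ?_
      rw [norm_mul, norm_pow]
      gcongr
      exact mem_closedBall_zero_iff.mp hz
  have hcoeff : iteratedDeriv n f 0 = n.factorial * c n := by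
    have hunique := hseries.hasFPowerSeriesAt.eq_formalMultilinearSeries
      hseries.analyticAt.hasFPowerSeriesAt
    have hn := congrArg (fun q => q.coeff n) hunique
    simp only [p, FormalMultilinearSeries.coeff_ofScalars] at hn
    rw [hn, mul_div_cancel₀ _ (Nat.cast_ne_zero.mpr n.factorial_ne_zero)]
  have hcauchy := Complex.norm_iteratedDeriv_le_of_forall_mem_sphere_norm_le n hr hdiff hM
  rw [hcoeff, norm_mul, Complex.norm_natCast, le_div_iff₀ (by positivity), mul_assoc] at hcauchy
  exact le_of_mul_le_mul_left hcauchy (by positivity)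

lemma ae_summable_norm_mul_of_lintegral_enorm_le {Ω ι E : Type*} [MeasurableSpace Ω]
    [Countable ι] [NormedAddCommGroup E] {P : Measure Ω} {X : ι → Ω → E}
    (hX : ∀ i, AEStronglyMeasurable (X i) P) {C : ℝ≥0∞} (hC : C ≠ ∞)
    (hmoment : ∀ i, ∫⁻ ω, ‖X i ω‖ₑ ∂P ≤ C) {c : ι → ℝ} (hc0 : ∀ i, 0 ≤ c i)
    (hc : Summable c) :
    ∀ᵐ ω ∂P, Summable fun i => ‖X i ω‖ * c i := by
  have hfinite : ∫⁻ ω, ∑' i, ‖X i ω‖ₑ * ENNReal.ofReal (c i) ∂P ≠ ∞ := by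
    rw [lintegral_tsum fun i => (hX i).enorm.mul_const _]
    refine ne_top_of_le_ne_top (b := ∑' i, C * ENNReal.ofReal (c i)) ?_
      (ENNReal.tsum_le_tsum fun i => ?_)
    · rw [ENNReal.tsum_mul_left, ← ENNReal.ofReal_tsum_of_nonneg hc0 hc]
      exact ENNReal.mul_ne_top hC ENNReal.ofReal_ne_top
    · rw [lintegral_mul_const' _ _ ENNReal.ofReal_ne_top]
      gcongr
      exact hmoment i
  filter_upwards [ae_lt_top' (AEMeasurable.tsum fun i => (hX i).enorm.mul_const _) hfinite]
    with ω hω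
  refine (ENNReal.summable_toReal hω.ne).congr fun i => ?_
  rw [ENNReal.toReal_mul, toReal_enorm, ENNReal.toReal_ofReal (hc0 i)]

lemma ProbabilityTheory.iIndepFun.measure_iInter_preimage_closedBall_le {Ω ι : Type*}
    [MeasurableSpace Ω] {P : Measure Ω} {φ : ι → Ω → ℂ} (hmeas : ∀ i, Measurable (φ i))
    (hindep : iIndepFun φ P)
    (hgauss : ∀ i, P.map (φ i) = stdComplexGaussian) (s : Finset ι) {ρ : ι → ℝ}
    (hρ : ∀ i, 0 ≤ ρ i) :
    P (⋂ i ∈ s, φ i ⁻¹' closedBall 0 (ρ i)) ≤ ∏ i ∈ s, ENNReal.ofReal (ρ i ^ 2) := by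
  rw [hindep.measure_inter_preimage_eq_mul s fun i _ => measurableSet_closedBall]
  refine Finset.prod_le_prod' fun i _ => ?_
  rw [← Measure.map_apply (hmeas i) measurableSet_closedBall, hgauss i]
  exact stdComplexGaussian_closedBall_le (hρ i)

lemma ae_norm_mul_le_of_forall_norm_tsum_le {Ω : Type*} [MeasurableSpace Ω] {P : Measure Ω}
    {φ : ℕ → Ω → ℂ} (hmeas : ∀ n, Measurable (φ n))
    (hgauss : ∀ n, P.map (φ n) = stdComplexGaussian) {a : ℕ → ℝ} (ha : ∀ n, 0 ≤ a n) {r : ℝ}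
    (hr : 0 < r) (hsum : Summable fun n => a n * r ^ n) :
    ∀ᵐ ω ∂P, (∀ z : ℂ, ‖z‖ ≤ r → ‖∑' n, φ n ω * (a n : ℂ) * z ^ n‖ ≤ 1) →
      ∀ n, ‖φ n ω‖ * (a n * r ^ n) ≤ 1 := by
  have hmoment : ∀ n, ∫⁻ ω, ‖φ n ω‖ₑ ∂P = ∫⁻ z, ‖z‖ₑ ∂stdComplexGaussian := fun n => by
    rw [← hgauss n, lintegral_map measurable_enorm (hmeas n)]
  filter_upwards [ae_summable_norm_mul_of_lintegral_enorm_le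
    (fun n => (hmeas n).aestronglyMeasurable) lintegral_enorm_stdComplexGaussian_lt_top.ne
    (fun n => (hmoment n).le) (fun n => mul_nonneg (ha n) (pow_nonneg hr.le n)) hsum]
    with ω hsummable hbound n
  have hnorm : ∀ n, ‖φ n ω * (a n : ℂ)‖ * r ^ n = ‖φ n ω‖ * (a n * r ^ n) := fun n => by
    rw [norm_mul, Complex.norm_real, Real.norm_of_nonneg (ha n), mul_assoc]
  rw [← hnorm]
  refine norm_mul_pow_le_of_forall_mem_sphere_norm_tsum_le (c := fun n => φ n ω * a n) hr ?_
    (fun z hz => ?_) n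
  · simpa only [hnorm] using hsummable
  · exact hbound z (mem_sphere_zero_iff_norm.mp hz).le

lemma measure_forall_norm_tsum_le_one_le_prod {Ω : Type*} [MeasurableSpace Ω] {P : Measure Ω}
    {φ : ℕ → Ω → ℂ} (hmeas : ∀ n, Measurable (φ n)) (hindep : iIndepFun φ P)
    (hgauss : ∀ n, P.map (φ n) = stdComplexGaussian) {a : ℕ → ℝ} (ha : ∀ n, 0 < a n) {r : ℝ}
    (hr : 0 < r) (hsum : Summable fun n => a n * r ^ n) (s : Finset ℕ) :
    P {ω | ∀ z : ℂ, ‖z‖ ≤ r → ‖∑' n, φ n ω * (a n : ℂ) * z ^ n‖ ≤ 1} ≤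
      ENNReal.ofReal (∏ n ∈ s, ((a n * r ^ n) ^ 2)⁻¹) := by
  have hpos : ∀ n, 0 < a n * r ^ n := fun n => mul_pos (ha n) (pow_pos hr n)
  calc P {ω | ∀ z : ℂ, ‖z‖ ≤ r → ‖∑' n, φ n ω * (a n : ℂ) * z ^ n‖ ≤ 1}
      ≤ P (⋂ n ∈ s, φ n ⁻¹' closedBall 0 (a n * r ^ n)⁻¹) := by
        refine measure_mono_ae ?_
        filter_upwards [ae_norm_mul_le_of_forall_norm_tsum_le hmeas hgauss (fun n => (ha n).le) hr
          hsum] with ω hcoeff hevent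
        refine Set.mem_iInter₂.mpr fun n _ => mem_closedBall_zero_iff.mpr ?_
        rw [← one_div, le_div_iff₀ (hpos n)]
        exact hcoeff hevent n
    _ ≤ ∏ n ∈ s, ENNReal.ofReal ((a n * r ^ n)⁻¹ ^ 2) :=
        hindep.measure_iInter_preimage_closedBall_le hmeas hgauss s fun n =>
          (inv_pos.mpr (hpos n)).le
    _ = ENNReal.ofReal (∏ n ∈ s, ((a n * r ^ n) ^ 2)⁻¹) := by
        rw [ENNReal.ofReal_prod_of_nonneg fun n _ => by positivity]
        simp only [inv_pow]

lemma prod_inv_sq_eq_exp_neg_two_mul_sum_log {ι : Type*} (s : Finset ι) {x : ι → ℝ}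
    (hx : ∀ i ∈ s, 0 < x i) :
    ∏ i ∈ s, (x i ^ 2)⁻¹ = exp (-(2 * ∑ i ∈ s, log (x i))) := by
  rw [Finset.mul_sum, ← Finset.sum_neg_distrib, exp_sum]
  refine Finset.prod_congr rfl fun i hi => ?_
  rw [exp_neg, two_mul, exp_add, exp_log (hx i hi), sq]

theorem stmt17_general {Ω : Type*} [MeasurableSpace Ω] (P : Measure Ω)
    (φ : ℕ → Ω → ℂ) (hmeas : ∀ n, Measurable (φ n))
    (hindep : iIndepFun φ P)
    (hgauss : ∀ n, P.map (φ n) = stdComplexGaussian)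
    (a : ℕ → ℝ) (ha : ∀ n, 0 < a n)
    (r : ℝ) (hr : 1 ≤ r) (hsum : Summable (fun n => a n * r ^ n))
    (hfin : {n : ℕ | 1 ≤ a n * r ^ n}.Finite) :
    P {ω | ∀ z : ℂ, ‖z‖ ≤ r →
        ‖∑' n : ℕ, φ n ω * (a n : ℂ) * z ^ n‖ ≤ 1} ≤
      ENNReal.ofReal (∏ n ∈ hfin.toFinset, ((a n * r ^ n) ^ 2)⁻¹) ∧
    ∏ n ∈ hfin.toFinset, ((a n * r ^ n) ^ 2)⁻¹ =
      Real.exp (-(2 * ∑ n ∈ hfin.toFinset, Real.log (a n * r ^ n))) := by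
  have hr0 : 0 < r := one_pos.trans_le hr
  exact ⟨measure_forall_norm_tsum_le_one_le_prod hmeas hindep hgauss ha hr0 hsum _,
    prod_inv_sq_eq_exp_neg_two_mul_sum_log _ fun n _ => mul_pos (ha n) (pow_pos hr0 n)⟩

/-- If `f(z) = Σ φₙ aₙ zⁿ` with independent standard complex Gaussian `φₙ`, `aₙ > 0`,
`a₀ = 1`, then `P(max_{|z| ≤ r} |f| ≤ 1) ≤ ∏_{aₙ rⁿ ≥ 1} (aₙ rⁿ)⁻² = exp (-S(r))`. -/
theorem stmt17 {Ω : Type*} [MeasurableSpace Ω] (P : Measure Ω) [IsProbabilityMeasure P]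
    (φ : ℕ → Ω → ℂ) (hmeas : ∀ n, Measurable (φ n))
    (hindep : iIndepFun φ P)
    (hgauss : ∀ n, P.map (φ n) = stdComplexGaussian)
    (a : ℕ → ℝ) (ha : ∀ n, 0 < a n) (ha0 : a 0 = 1)
    (r : ℝ) (hr : 1 ≤ r) (hsum : Summable (fun n => a n * r ^ n))
    (hfin : {n : ℕ | 1 ≤ a n * r ^ n}.Finite) :
    P {ω | ∀ z : ℂ, ‖z‖ ≤ r →
        ‖∑' n : ℕ, φ n ω * (a n : ℂ) * z ^ n‖ ≤ 1} ≤
      ENNReal.ofReal (∏ n ∈ hfin.toFinset, ((a n * r ^ n) ^ 2)⁻¹) ∧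
    ∏ n ∈ hfin.toFinset, ((a n * r ^ n) ^ 2)⁻¹ =
      Real.exp (-(2 * ∑ n ∈ hfin.toFinset, Real.log (a n * r ^ n))) :=
  stmt17_general P φ hmeas hindep hgauss a ha r hr hsum hfin
end

section
/- Let a(t) = exp(-eᵗ) and aₙ = a(n). Then, as r → ∞: N₁(r) = log log r + log log log r + O(1); log μ(r) = log r · log log r + O(log r); and S(r) = Θ(log r · (log log r)²), where N₁(r) = #{n : aₙrⁿ ≥ 1}, μ(r) = maxₙ aₙrⁿ, and S(r) = 2Σ_{n∈𝒩₁(r)} log(aₙrⁿ). -/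
open Filter Asymptotics

/-- The coefficients `aₙ = exp (-eⁿ)`. -/
noncomputable def a18 (n : ℕ) : ℝ := Real.exp (-Real.exp n)

/-- `N₁(r) = #{n : aₙ rⁿ ≥ 1}`. -/
noncomputable def N1' (r : ℝ) : ℝ := ({n : ℕ | 1 ≤ a18 n * r ^ n}.ncard : ℝ)

/-- `μ(r) = maxₙ aₙ rⁿ` (the maximal term). -/
noncomputable def mu18 (r : ℝ) : ℝ := ⨆ n : ℕ, a18 n * r ^ n

/-- `S(r) = 2 Σ_{n ∈ 𝒩₁(r)} log (aₙ rⁿ)`. -/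
noncomputable def S18 (r : ℝ) : ℝ :=
  2 * ∑' n : ℕ,
    Set.indicator {n : ℕ | 1 ≤ a18 n * r ^ n} (fun n => Real.log (a18 n * r ^ n)) n

/-!
Write `L = log r` and `t = log L`, so that `aₙ rⁿ = exp (n L - eⁿ)`. Then `aₙ rⁿ ≥ 1` iff `n ≥ 1`
and `n - log n ≤ t`; since `x - log x` increases on `[1, ∞)`, the set `𝒩₁(r)` is an interval
`{1, …, N}` with `N - log N ≤ t < (N + 1) - log (N + 1)`, which forces `N = t + log t + O(1)`.
The tangent line of `exp` at `t` gives `n L - eⁿ ≤ L (t - 1)` for every `n`, and `n = ⌊t⌋` gives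
`n L - eⁿ ≥ L (t - 2)`, whence `log μ(r) = L t + O(L)`. Finally `S(r) = 2 ∑_{n ≤ N} (n L - eⁿ)`,
where the geometric sum `∑_{n ≤ N} eⁿ ≤ 2 e^N ≤ 2 N L` is negligible against `∑_{n ≤ N} n L ≍ t² L`.
-/

open Real

lemma log_le_half_self {x : ℝ} (hx : 0 ≤ x) : log x ≤ x / 2 := by
  rcases hx.eq_or_lt with rfl | hx
  · simp
  have h := log_le_sub_one_of_pos (half_pos hx)
  rw [log_div hx.ne' two_ne_zero] at h
  linarith [log_two_lt_d9]

lemma monotoneOn_sub_log : MonotoneOn (fun x : ℝ => x - log x) (Set.Ici 1) := by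
  intro x hx y _ hxy
  have hx0 : 0 < x := one_pos.trans_le hx
  have h := log_le_sub_one_of_pos (div_pos (hx0.trans_le hxy) hx0)
  rw [log_div (hx0.trans_le hxy).ne' hx0.ne'] at h
  have : y / x - 1 ≤ y - x := by
    rw [div_sub_one hx0.ne', div_le_iff₀ hx0]
    nlinarith [Set.mem_Ici.1 hx]
  dsimp only
  linarith

lemma le_two_mul_of_sub_log_le {x t : ℝ} (hx : 0 ≤ x) (h : x - log x ≤ t) : x ≤ 2 * t := by
  linarith [log_le_half_self hx]

lemma le_add_log_add_one_of_sub_log_le {x t : ℝ} (hx : 1 ≤ x) (h : x - log x ≤ t) :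
    x ≤ t + log t + 1 := by
  have hx2t := le_two_mul_of_sub_log_le (by linarith) h
  have ht : 0 < t := by linarith
  have : log x ≤ log 2 + log t := by
    rw [← log_mul two_ne_zero ht.ne']
    exact log_le_log (by linarith) hx2t
  linarith [log_two_lt_d9]

lemma add_log_lt_of_lt_sub_log {x t : ℝ} (hx : 1 ≤ x) (ht : 0 < t) (h : t < x - log x) :
    t + log t < x := by
  have := log_nonneg hx
  have := log_lt_log ht (show t < x by linarith)
  linarith

lemma exists_setOf_le_eq_Icc {g : ℝ → ℝ} (hg : MonotoneOn g (Set.Ici 1)) {t : ℝ} (h1 : g 1 ≤ t)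
    (hbdd : BddAbove {n : ℕ | g n ≤ t}) :
    ∃ N : ℕ, {n : ℕ | 1 ≤ n ∧ g n ≤ t} = Set.Icc 1 N ∧ 1 ≤ N ∧ g N ≤ t ∧ t < g (N + 1) := by
  set A := {n : ℕ | 1 ≤ n ∧ g n ≤ t}
  have hA : BddAbove A := hbdd.mono fun n hn => hn.2
  obtain ⟨hN1, hNt⟩ : sSup A ∈ A := Nat.sSup_mem ⟨1, le_rfl, by simpa using h1⟩ hA
  refine ⟨sSup A, ?_, hN1, hNt, ?_⟩
  · ext n
    refine ⟨fun hn => ⟨hn.1, le_csSup hA hn⟩, fun ⟨hn1, hnN⟩ => ⟨hn1, ?_⟩⟩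
    exact (hg (Set.mem_Ici.2 (Nat.one_le_cast.2 hn1)) (Set.mem_Ici.2 (Nat.one_le_cast.2 hN1))
      (Nat.cast_le.2 hnN)).trans hNt
  · by_contra! h
    have := le_csSup hA (⟨by omega, by exact_mod_cast h⟩ : sSup A + 1 ∈ A)
    omega

lemma exp_le_log_and_le_log_log_of_exp_exp_le {c r : ℝ} (hr : exp (exp c) ≤ r) :
    exp c ≤ log r ∧ c ≤ log (log r) := by
  have hL : exp c ≤ log r := (le_log_iff_exp_le ((exp_pos _).trans_le hr)).2 hr
  exact ⟨hL, (le_log_iff_exp_le ((exp_pos _).trans_le hL)).2 hL⟩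

lemma a18_mul_pow_eq {r : ℝ} (hr : 0 < r) (n : ℕ) :
    a18 n * r ^ n = exp (n * log r - exp n) := by
  rw [a18, ← rpow_natCast, rpow_def_of_pos hr, ← exp_add]
  ring_nf

lemma one_le_a18_mul_pow_iff {r : ℝ} (hr : 1 < r) (n : ℕ) :
    1 ≤ a18 n * r ^ n ↔ 1 ≤ n ∧ (n : ℝ) - log n ≤ log (log r) := by
  rw [a18_mul_pow_eq (by linarith) n, one_le_exp_iff, sub_nonneg]
  rcases Nat.eq_zero_or_pos n with rfl | hn
  · simp
  have hn' : (0 : ℝ) < n := by exact_mod_cast hn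
  rw [← le_log_iff_exp_le (mul_pos hn' (log_pos hr)), log_mul hn'.ne' (log_pos hr).ne']
  exact ⟨fun h => ⟨hn, by linarith⟩, fun h => by linarith [h.2]⟩

lemma exists_setOf_one_le_a18_mul_pow_eq_Icc {r : ℝ} (hr : exp (exp 1) ≤ r) :
    ∃ N : ℕ, {n : ℕ | 1 ≤ a18 n * r ^ n} = Set.Icc 1 N ∧ 1 ≤ N ∧
      (N : ℝ) - log N ≤ log (log r) ∧ log (log r) < (N + 1 : ℝ) - log (N + 1) := by
  obtain ⟨hL, ht⟩ := exp_le_log_and_le_log_log_of_exp_exp_le hr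
  have hr1 : 1 < r := by
    rw [← log_pos_iff ((exp_pos _).trans_le hr).le]
    exact (exp_pos 1).trans_le hL
  have hset : {n : ℕ | 1 ≤ a18 n * r ^ n} =
      {n : ℕ | 1 ≤ n ∧ (fun x : ℝ => x - log x) n ≤ log (log r)} :=
    Set.ext fun n => one_le_a18_mul_pow_iff hr1 n
  rw [hset]
  refine exists_setOf_le_eq_Icc monotoneOn_sub_log (by simpa using ht) ⟨⌊2 * log (log r)⌋₊, ?_⟩
  exact fun n hn => Nat.le_floor (le_two_mul_of_sub_log_le n.cast_nonneg hn)

lemma abs_N1'_sub_le {r : ℝ} (hr : exp (exp 1) ≤ r) :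
    |N1' r - (log (log r) + log (log (log r)))| ≤ 1 := by
  obtain ⟨N, hA, hN1, hle, hlt⟩ := exists_setOf_one_le_a18_mul_pow_eq_Icc hr
  have ht := (exp_le_log_and_le_log_log_of_exp_exp_le hr).2
  have hN1' : (1 : ℝ) ≤ N := by exact_mod_cast hN1
  have hup := le_add_log_add_one_of_sub_log_le hN1' hle
  have hlow := add_log_lt_of_lt_sub_log (by linarith) (by linarith) hlt
  rw [N1', hA, Set.ncard_Icc_nat, Nat.add_sub_cancel, abs_le]
  constructor <;> linarith

lemma mul_sub_exp_le {L : ℝ} (hL : 0 < L) (x : ℝ) : x * L - exp x ≤ L * (log L - 1) := by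
  have h : exp x = L * exp (x - log L) := by rw [exp_sub, exp_log hL]; field_simp
  have := mul_le_mul_of_nonneg_left (add_one_le_exp (x - log L)) hL.le
  linarith

lemma abs_log_mu18_sub_le {r : ℝ} (hr : exp 1 ≤ r) :
    |log (mu18 r) - log r * log (log r)| ≤ 2 * log r := by
  have hr0 : 0 < r := (exp_pos 1).trans_le hr
  have hL : 1 ≤ log r := (le_log_iff_exp_le hr0).2 hr
  set L := log r
  set t := log L
  have ht : 0 ≤ t := log_nonneg hL
  have hub (n : ℕ) : a18 n * r ^ n ≤ exp (L * (t - 1)) := by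
    rw [a18_mul_pow_eq hr0]
    exact exp_le_exp.2 (mul_sub_exp_le (by linarith) n)
  have hlb : exp (L * t - 2 * L) ≤ a18 ⌊t⌋₊ * r ^ ⌊t⌋₊ := by
    rw [a18_mul_pow_eq hr0]
    refine exp_le_exp.2 ?_
    have hexp : exp ⌊t⌋₊ ≤ L := by
      rw [← exp_log (by linarith : 0 < L)]
      exact exp_le_exp.2 (Nat.floor_le ht)
    nlinarith [Nat.lt_floor_add_one t]
  have hmu_le : mu18 r ≤ exp (L * (t - 1)) := ciSup_le hub
  have hle_mu : exp (L * t - 2 * L) ≤ mu18 r :=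
    hlb.trans (le_ciSup ⟨_, Set.forall_mem_range.2 hub⟩ _)
  have hmu : 0 < mu18 r := (exp_pos _).trans_le hle_mu
  have hlog_le := (log_le_iff_le_exp hmu).2 hmu_le
  have hle_log := (le_log_iff_exp_le hmu).2 hle_mu
  rw [abs_le]
  constructor <;> linarith

lemma sq_le_two_mul_sum_Icc (N : ℕ) : (N : ℝ) ^ 2 ≤ 2 * ∑ n ∈ Finset.Icc 1 N, (n : ℝ) := by
  induction N with
  | zero => simp
  | succ N ih =>
    rw [Finset.sum_Icc_succ_top (by omega)]
    push_cast
    nlinarith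

lemma sum_Icc_pow_le_two_mul {q : ℝ} (hq : 2 ≤ q) (N : ℕ) :
    ∑ n ∈ Finset.Icc 1 N, q ^ n ≤ 2 * q ^ N := by
  induction N with
  | zero => simp
  | succ N ih =>
    rw [Finset.sum_Icc_succ_top (by omega), pow_succ]
    nlinarith [pow_nonneg (by linarith : (0 : ℝ) ≤ q) N]

lemma sum_Icc_mul_sub_exp_le {L : ℝ} (hL : 0 ≤ L) (N : ℕ) :
    ∑ n ∈ Finset.Icc 1 N, ((n : ℝ) * L - exp n) ≤ N ^ 2 * L := by
  calc ∑ n ∈ Finset.Icc 1 N, ((n : ℝ) * L - exp n)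
      ≤ ∑ _n ∈ Finset.Icc 1 N, (N : ℝ) * L := by
        refine Finset.sum_le_sum fun n hn => ?_
        have hnN : (n : ℝ) ≤ N := by exact_mod_cast (Finset.mem_Icc.1 hn).2
        nlinarith [exp_pos (n : ℝ)]
    _ = N ^ 2 * L := by
        simp only [Finset.sum_const, Nat.card_Icc, add_tsub_cancel_right, nsmul_eq_mul]; ring

lemma sum_Icc_mul_sub_exp_ge {L : ℝ} (hL : 0 ≤ L) (N : ℕ) :
    N ^ 2 * L / 2 - 2 * exp N ≤ ∑ n ∈ Finset.Icc 1 N, ((n : ℝ) * L - exp n) := by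
  have hgeom := sum_Icc_pow_le_two_mul exp_one_gt_two.le N
  simp only [exp_one_pow] at hgeom
  rw [Finset.sum_sub_distrib, ← Finset.sum_mul]
  nlinarith [mul_le_mul_of_nonneg_right (sq_le_two_mul_sum_Icc N) hL]

lemma S18_eq_sum_Icc {r : ℝ} (hr : 0 < r) {N : ℕ}
    (hA : {n : ℕ | 1 ≤ a18 n * r ^ n} = Set.Icc 1 N) :
    S18 r = 2 * ∑ n ∈ Finset.Icc 1 N, ((n : ℝ) * log r - exp n) := by
  rw [S18, hA, ← Finset.coe_Icc, ← tsum_subtype,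
    Finset.tsum_subtype' _ fun n : ℕ => log (a18 n * r ^ n)]
  congr 1
  exact Finset.sum_congr rfl fun n _ => by rw [a18_mul_pow_eq hr, log_exp]

lemma S18_bounds {r : ℝ} (hr : exp (exp 20) ≤ r) :
    log r * log (log r) ^ 2 / 2 ≤ S18 r ∧ S18 r ≤ 8 * (log r * log (log r) ^ 2) := by
  obtain ⟨hL, ht⟩ := exp_le_log_and_le_log_log_of_exp_exp_le hr
  obtain ⟨N, hA, hN1, hle, hlt⟩ :=
    exists_setOf_one_le_a18_mul_pow_eq_Icc (hr.trans' (by gcongr; norm_num))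
  rw [S18_eq_sum_Icc ((exp_pos _).trans_le hr) hA]
  set L := log r
  set t := log L
  have hL0 : 0 < L := (exp_pos _).trans_le hL
  have hN2t : (N : ℝ) ≤ 2 * t := le_two_mul_of_sub_log_le N.cast_nonneg hle
  have hNt : t - 1 ≤ N := by
    have := add_log_lt_of_lt_sub_log (by linarith [N.cast_nonneg (α := ℝ)]) (by linarith) hlt
    linarith [log_nonneg (by linarith : (1 : ℝ) ≤ t)]
  have hexpN : exp N ≤ N * L := by
    have hN0 : (0 : ℝ) < N := by exact_mod_cast hN1
    rw [← le_log_iff_exp_le (by positivity), log_mul hN0.ne' hL0.ne']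
    linarith
  have hup := sum_Icc_mul_sub_exp_le hL0.le N
  have hlow := sum_Icc_mul_sub_exp_ge hL0.le N
  have hN_sq : (N : ℝ) ^ 2 ≤ (2 * t) ^ 2 := pow_le_pow_left₀ N.cast_nonneg hN2t 2
  have hsq_N : (t - 1) ^ 2 ≤ (N : ℝ) ^ 2 := pow_le_pow_left₀ (by linarith) hNt 2
  constructor
  · nlinarith [mul_le_mul_of_nonneg_right hsq_N hL0.le, mul_le_mul_of_nonneg_right hN2t hL0.le,
      mul_nonneg (by nlinarith : (0 : ℝ) ≤ t ^ 2 / 2 - 10 * t + 1) hL0.le]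
  · nlinarith [mul_le_mul_of_nonneg_right hN_sq hL0.le]

lemma N1'_sub_isBigO :
    (fun r : ℝ => N1' r - (log (log r) + log (log (log r)))) =O[atTop] (fun _ : ℝ => (1 : ℝ)) :=
  IsBigO.of_bound 1 <| (eventually_ge_atTop (exp (exp 1))).mono fun r hr => by
    simpa using abs_N1'_sub_le hr

lemma log_mu18_sub_isBigO :
    (fun r : ℝ => log (mu18 r) - log r * log (log r)) =O[atTop] (fun r : ℝ => log r) :=
  IsBigO.of_bound 2 <| (eventually_ge_atTop (exp 1)).mono fun r hr => by
    have hL : 0 ≤ log r := log_nonneg ((one_le_exp zero_le_one).trans hr)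
    rw [norm_eq_abs, norm_eq_abs, abs_of_nonneg hL]
    exact abs_log_mu18_sub_le hr

lemma S18_isTheta : S18 =Θ[atTop] (fun r : ℝ => log r * log (log r) ^ 2) := by
  have hev : ∀ᶠ r : ℝ in atTop, 0 ≤ log r * log (log r) ^ 2 ∧ log r * log (log r) ^ 2 / 2 ≤ S18 r ∧
      S18 r ≤ 8 * (log r * log (log r) ^ 2) :=
    (eventually_ge_atTop (exp (exp 20))).mono fun r hr => by
      have hL := (exp_le_log_and_le_log_log_of_exp_exp_le hr).1
      exact ⟨mul_nonneg ((exp_pos _).le.trans hL) (sq_nonneg _), S18_bounds hr⟩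
  refine ⟨IsBigO.of_bound 8 ?_, IsBigO.of_bound 2 ?_⟩ <;>
    filter_upwards [hev] with r ⟨hpos, hlow, hup⟩ <;>
    rw [norm_eq_abs, norm_eq_abs, abs_of_nonneg hpos, abs_of_nonneg (by linarith)] <;>
    linarith

/-- For `aₙ = exp (-eⁿ)`, as `r → ∞`:
`N₁(r) = log log r + log log log r + O(1)`,
`log μ(r) = log r · log log r + O(log r)`, and
`S(r) = Θ(log r · (log log r)²)`. -/
theorem stmt18 :
    (fun r : ℝ => N1' r - (Real.log (Real.log r) + Real.log (Real.log (Real.log r))))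
        =O[atTop] (fun _ : ℝ => (1 : ℝ)) ∧
    (fun r : ℝ => Real.log (mu18 r) - Real.log r * Real.log (Real.log r))
        =O[atTop] (fun r : ℝ => Real.log r) ∧
    S18 =Θ[atTop] (fun r : ℝ => Real.log r * (Real.log (Real.log r)) ^ 2) :=
  ⟨N1'_sub_isBigO, log_mu18_sub_isBigO, S18_isTheta⟩
end
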